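/- arXiv:1501.04775 — 8 statements merged into one kernel-verified Lean document; each statement's English description precedes it below -/
import Mathlib

section
/- Let M ≥ 1 and let P ∈ ℂ^{M×M} be a unitary matrix. There exists a matrix A ∈ ℂ^{M×M} such that AP − PA is invertible if and only if no eigenvalue of P has algebraic multiplicity exceeding ⌊M/2⌋. -/
/-!
A unitary matrix is diagonalisable (for a normal `N`, `N²x = 0` forces `Nx = 0`, so generalised
eigenvectors are eigenvectors), and both sides of the equivalence are invariant under
similarity, so we may take `P = diagonal d`. Then `(AP - PA)ᵢⱼ = Aᵢⱼ (dⱼ - dᵢ)` vanishes on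
`F × F` for every fibre `F` of `d`, and an invertible matrix with a zero `F × F` block has
`2 |F| ≤ M`. Conversely, if every fibre has at most `M / 2` elements, Hall's theorem yields a
permutation `σ` with `d (σ i) ≠ d i` for all `i`, and `A i (σ i) = (d (σ i) - d i)⁻¹` makes
`AP - PA` a permutation matrix.
-/

open Matrix Polynomial Module Finset
open scoped ComplexOrder

section Diagonal

variable {ι K : Type*} [Fintype ι] [DecidableEq ι] [Field K]

theorem Matrix.card_add_card_le_of_isUnit {C : Matrix ι ι K} (hC : IsUnit C) {s t : Finset ι}
    (h : ∀ i ∈ s, ∀ j ∈ t, C i j = 0) : #s + #t ≤ Fintype.card ι := by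
  -- the columns indexed by `t` stay independent after deleting the rows indexed by `s`
  have hcols : LinearIndependent K (fun j : t => fun i : ↥sᶜ => C i j) := by
    rw [Fintype.linearIndependent_iff]
    intro g hg
    refine Fintype.linearIndependent_iff.mp
      ((linearIndependent_cols_of_isUnit hC).comp _ Subtype.val_injective) g (funext fun i => ?_)
    by_cases hi : i ∈ s
    · simp [h i hi]
    · simpa using congrFun hg ⟨i, by simpa using hi⟩
  have hcard := hcols.fintype_card_le_finrank
  rw [Module.finrank_fintype_fun_eq_card, Fintype.card_coe, Fintype.card_coe, card_compl] at hcard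
  have := card_le_univ s
  omega

theorem Matrix.mul_diagonal_sub_diagonal_mul_apply {R : Type*} [CommRing R] (B : Matrix ι ι R)
    (d : ι → R) (i j : ι) : (B * diagonal d - diagonal d * B) i j = B i j * (d j - d i) := by
  simp [mul_sub, mul_comm]

theorem exists_perm_forall_apply_ne {α : Type*} [DecidableEq α] (d : ι → α)
    (h : ∀ v, 2 * #{i | d i = v} ≤ Fintype.card ι) :
    ∃ σ : Equiv.Perm ι, ∀ i, d (σ i) ≠ d i := by
  -- Hall's condition: a set inside one fibre sees the whole complement of that fibre,
  -- and a set meeting two fibres sees everything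
  have hall : ∀ s : Finset ι, #s ≤ #(s.biUnion fun i => {j | d j ≠ d i}) := by
    intro s
    rcases s.eq_empty_or_nonempty with rfl | ⟨i₀, hi₀⟩
    · simp
    by_cases hs : ∀ i ∈ s, d i = d i₀
    · calc #s ≤ #{i | d i = d i₀} := card_le_card fun i hi => by simp [hs i hi]
        _ ≤ #{j | d j ≠ d i₀} := by
          have hsplit := card_filter_add_card_filter_not (s := univ) (fun j => d j = d i₀)
          have hfibre := h (d i₀)
          rw [card_univ] at hsplit
          simp only [ne_eq]
          omega
        _ ≤ _ :=
          card_le_card (subset_biUnion_of_mem (fun i => ({j | d j ≠ d i} : Finset ι)) hi₀)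
    · push Not at hs
      obtain ⟨i₁, hi₁, hne⟩ := hs
      calc #s ≤ #(univ : Finset ι) := card_le_univ s
        _ ≤ _ := card_le_card fun j _ => by
          by_cases hj : d j = d i₀
          · exact mem_biUnion.mpr ⟨i₁, hi₁, by simp [hj, Ne.symm hne]⟩
          · exact mem_biUnion.mpr ⟨i₀, hi₀, by simp [hj]⟩
  obtain ⟨f, hf, hfd⟩ := (all_card_le_biUnion_card_iff_exists_injective _).mp hall
  exact ⟨Equiv.ofBijective f (Finite.injective_iff_bijective.mp hf),
    fun i => by simpa using hfd i⟩

theorem Matrix.isUnit_permMatrix (σ : Equiv.Perm ι) : IsUnit (σ.permMatrix K) :=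
  IsUnit.of_mul_eq_one (σ⁻¹.permMatrix K) (by rw [← permMatrix_mul]; simp)

theorem Matrix.exists_isUnit_mul_diagonal_sub_iff [DecidableEq K] (d : ι → K) :
    (∃ B : Matrix ι ι K, IsUnit (B * diagonal d - diagonal d * B)) ↔
      ∀ v, 2 * #{i | d i = v} ≤ Fintype.card ι := by
  constructor
  · rintro ⟨B, hB⟩ v
    have := card_add_card_le_of_isUnit hB (s := {i | d i = v}) (t := {i | d i = v})
      fun i hi j hj => by
        simp only [mem_filter, mem_univ, true_and] at hi hj
        rw [mul_diagonal_sub_diagonal_mul_apply, hi, hj, sub_self, mul_zero]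
    omega
  · intro h
    obtain ⟨σ, hσ⟩ := exists_perm_forall_apply_ne d h
    refine ⟨of fun i j => if σ i = j then (d j - d i)⁻¹ else 0, ?_⟩
    convert isUnit_permMatrix (K := K) σ using 1
    ext i j
    rw [mul_diagonal_sub_diagonal_mul_apply]
    simp only [of_apply, PEquiv.toMatrix_apply, Equiv.toPEquiv_apply, Option.mem_def,
      Option.some.injEq]
    split_ifs with hij
    · subst hij
      exact inv_mul_cancel₀ (sub_ne_zero.mpr (hσ i))
    · exact zero_mul _

theorem Matrix.rootMultiplicity_charpoly_diagonal [DecidableEq K] (d : ι → K) (v : K) :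
    (diagonal d).charpoly.rootMultiplicity v = #{i | d i = v} := by
  rw [charpoly_diagonal, ← count_roots,
    roots_prod _ _ (prod_ne_zero_iff.mpr fun i _ => X_sub_C_ne_zero (d i))]
  simp [Multiset.count_map, eq_comm, Finset.card_def]

end Diagonal

theorem exists_isUnit_commutator_map_iff {R S : Type*} [Ring R] [Ring S] (e : R ≃+* S) (p : R) :
    (∃ a, IsUnit (a * e p - e p * a)) ↔ ∃ a, IsUnit (a * p - p * a) := by
  constructor
  · rintro ⟨a, ha⟩
    exact ⟨e.symm a, by simpa using ha.map e.symm⟩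
  · rintro ⟨a, ha⟩
    exact ⟨e a, by simpa using ha.map e⟩

namespace Module.End

theorem apply_eq_zero_of_pow_apply_eq_zero {R M : Type*} [Semiring R] [AddCommMonoid M]
    [Module R M] {g : End R M} (hg : ∀ x, g (g x) = 0 → g x = 0) :
    ∀ (k : ℕ) (x : M), (g ^ k) x = 0 → g x = 0
  | 0, x, hx => by simp_all
  | k + 1, x, hx => hg x <| apply_eq_zero_of_pow_apply_eq_zero hg k (g x) <| by
      rwa [pow_succ, mul_apply] at hx

theorem maxGenEigenspace_eq_eigenspace_of_apply_apply_eq_zero {R M : Type*} [CommRing R]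
    [AddCommGroup M] [Module R M] {f : End R M} {μ : R}
    (hf : ∀ x, (f - μ • 1) ((f - μ • 1) x) = 0 → (f - μ • 1) x = 0) :
    f.maxGenEigenspace μ = f.eigenspace μ := by
  refine le_antisymm (fun x hx => ?_) eigenspace_le_maxGenEigenspace
  obtain ⟨k, hk⟩ := (mem_maxGenEigenspace _ _ _).mp hx
  rw [mem_eigenspace_iff]
  simpa [sub_eq_zero] using apply_eq_zero_of_pow_apply_eq_zero hf k x hk

theorem exists_basis_toMatrix_eq_diagonal {K V : Type*} [Field K] [AddCommGroup V] [Module K V]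
    [FiniteDimensional K V] {f : End K V} (h : ⨆ μ, f.eigenspace μ = ⊤) :
    ∃ (b : Basis (Fin (finrank K V)) K V) (d : Fin (finrank K V) → K),
      LinearMap.toMatrix b b f = diagonal d := by
  obtain ⟨s, hs, hspan, hli⟩ := exists_linearIndependent K (⋃ μ, (f.eigenspace μ : Set V))
  have hs_top : ⊤ ≤ Submodule.span K (Set.range ((↑) : s → V)) := by
    rw [Subtype.range_coe, hspan, ← Submodule.iSup_eq_span, h]
  let b₀ := Basis.mk hli hs_top
  let b := b₀.reindex (b₀.indexEquiv (finBasis K V))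
  have hb : ∀ i, ∃ μ, f (b i) = μ • b i := fun i => by
    simpa [b, b₀, mem_eigenspace_iff] using hs ((b₀.indexEquiv (finBasis K V)).symm i).2
  choose d hd using hb
  refine ⟨b, d, ?_⟩
  ext i j
  rw [LinearMap.toMatrix_apply, hd, map_smul, b.repr_self]
  rcases eq_or_ne i j with rfl | hij
  · simp
  · simp [hij, Finsupp.single_eq_of_ne hij]

end Module.End

theorem Matrix.mulVec_eq_zero_of_mulVec_mulVec_eq_zero {n R : Type*} [Fintype n] [Ring R]
    [PartialOrder R] [StarRing R] [StarOrderedRing R] [NoZeroDivisors R]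
    {N : Matrix n n R} [IsStarNormal N] {x : n → R} (hx : N *ᵥ N *ᵥ x = 0) : N *ᵥ x = 0 := by
  have hy : Nᴴ *ᵥ N *ᵥ x = 0 := by
    rw [← conjTranspose_mul_self_mulVec_eq_zero, conjTranspose_conjTranspose,
      ← star_eq_conjTranspose, ← star_comm_self', ← mulVec_mulVec, hx, mulVec_zero]
  rwa [mulVec_mulVec, conjTranspose_mul_self_mulVec_eq_zero] at hy

theorem Matrix.iSup_eigenspace_toLin'_eq_top {n : Type*} [Fintype n] [DecidableEq n]
    (A : Matrix n n ℂ) [IsStarNormal A] : ⨆ μ, End.eigenspace (toLin' A) μ = ⊤ := by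
  rw [← End.iSup_maxGenEigenspace_eq_top (toLin' A)]
  congr! 2 with μ
  refine (End.maxGenEigenspace_eq_eigenspace_of_apply_apply_eq_zero ?_).symm
  have : IsStarNormal (A - μ • 1) := Commute.isStarNormal_sub (by simp [Commute.smul_right])
  have h : toLin' A - μ • 1 = toLin' (A - μ • 1) := by
    rw [map_sub, map_smul, toLin'_one, End.one_eq_id]
  simpa only [h, toLin'_apply] using
    fun x => mulVec_eq_zero_of_mulVec_mulVec_eq_zero (x := x)

theorem exists_commutator_invertible_iff_multiplicity_le_general
    (M : ℕ) (P : Matrix (Fin M) (Fin M) ℂ) (hP : P * Pᴴ = 1) :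
    (∃ A : Matrix (Fin M) (Fin M) ℂ, IsUnit (A * P - P * A)) ↔
      ∀ lam : ℂ, (Matrix.charpoly P).rootMultiplicity lam ≤ M / 2 := by
  have : IsStarNormal P := isStarNormal_of_mem_unitary (mem_unitaryGroup_iff.mpr hP)
  obtain ⟨b, d, hbd⟩ := End.exists_basis_toMatrix_eq_diagonal P.iSup_eigenspace_toLin'_eq_top
  let e := toLinAlgEquiv'.trans (LinearMap.toMatrixAlgEquiv b)
  have he : e.toRingEquiv P = diagonal d := hbd
  have hcharpoly : P.charpoly = (diagonal d).charpoly := by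
    rw [← hbd, LinearMap.charpoly_toMatrix, charpoly_toLin']
  rw [← exists_isUnit_commutator_map_iff e.toRingEquiv, he, exists_isUnit_mul_diagonal_sub_iff,
    hcharpoly]
  simp only [rootMultiplicity_charpoly_diagonal, Fintype.card_fin, Module.finrank_fin_fun]
  exact forall_congr' fun v => by omega

/-- Let `M ≥ 1` and let `P` be an `M × M` unitary complex matrix. There
exists a matrix `A` such that `A*P - P*A` is invertible if and only if no eigenvalue of `P`
has algebraic multiplicity exceeding `⌊M/2⌋`. -/
theorem exists_commutator_invertible_iff_multiplicity_le
    (M : ℕ) (hM : 1 ≤ M) (P : Matrix (Fin M) (Fin M) ℂ) (hP : P * Pᴴ = 1) :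
    (∃ A : Matrix (Fin M) (Fin M) ℂ, IsUnit (A * P - P * A)) ↔
      ∀ lam : ℂ, (Matrix.charpoly P).rootMultiplicity lam ≤ M / 2 :=
  exists_commutator_invertible_iff_multiplicity_le_general M P hP
end

section
/- Let M ≥ 1, let P ∈ ℂ^{M×M} be a unitary matrix, and let λ ∈ ℂ be an eigenvalue of P whose algebraic multiplicity equals k. Then for every matrix A ∈ ℂ^{M×M}, the rank of AP − PA is at most 2(M − k). -/
/-!
Write `N = P - λ • 1`. Since `A * P - P * A = A * N - N * A`, its rank is at most `2 * rank N`.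
A unitary matrix is normal, hence so is `N`, and a normal matrix satisfies `ker N² = ker N`.
So the generalized eigenspace of `P` at `λ` is the eigenspace: geometric and algebraic
multiplicities agree, and rank–nullity gives `rank N = M - k`.
-/

open scoped Matrix

namespace Module.End

variable {R M : Type*} [CommRing R] [AddCommGroup M] [Module R M]

theorem maxGenEigenspace_eq_eigenspace_of_ker_sq {f : End R M} {μ : R}
    (h : ∀ x, (f - μ • 1) ((f - μ • 1) x) = 0 → (f - μ • 1) x = 0) :
    f.maxGenEigenspace μ = f.eigenspace μ := by
  refine le_antisymm (fun x hx ↦ ?_) eigenspace_le_maxGenEigenspace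
  obtain ⟨k, hk⟩ := (mem_maxGenEigenspace f μ x).mp hx
  clear hx
  rw [eigenspace_def, LinearMap.mem_ker]
  induction k generalizing x with
  | zero => simp_all
  | succ k ih =>
    rw [pow_succ, mul_apply] at hk
    exact h x (ih _ hk)

end Module.End

namespace Matrix

variable {n : Type*} [Fintype n]

section CommRing

variable {R : Type*} [CommRing R] [DecidableEq n]

theorem toLin'_sub_smul_one (P : Matrix n n R) (μ : R) :
    toLin' (P - μ • 1) = toLin' P - μ • 1 := by
  rw [map_sub, map_smul, toLin'_one]
  rfl

theorem eigenspace_toLin'_eq_ker (P : Matrix n n R) (μ : R) :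
    Module.End.eigenspace (toLin' P) μ = LinearMap.ker (toLin' (P - μ • 1)) := by
  rw [Module.End.eigenspace_def, toLin'_sub_smul_one]

end CommRing

section Field

variable {K : Type*} [Field K]

theorem rank_sub_le {m : Type*} (A B : Matrix m n K) : (A - B).rank ≤ A.rank + B.rank := by
  have hrange : LinearMap.range (A - B).mulVecLin ≤
      LinearMap.range A.mulVecLin ⊔ LinearMap.range B.mulVecLin := by
    rintro _ ⟨v, rfl⟩
    rw [mulVecLin_apply, sub_mulVec]
    exact Submodule.sub_mem_sup ⟨v, rfl⟩ ⟨v, rfl⟩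
  exact (Submodule.finrank_mono hrange).trans (Submodule.finrank_add_le_finrank_add_finrank _ _)

theorem rank_commutator_le [DecidableEq n] (A P : Matrix n n K) (μ : K) :
    (A * P - P * A).rank ≤ 2 * (P - μ • 1).rank := by
  have hcomm : A * P - P * A = A * (P - μ • 1) - (P - μ • 1) * A := by
    simp only [mul_sub, sub_mul, Matrix.mul_smul, Matrix.smul_mul, mul_one, one_mul]
    abel
  rw [hcomm, two_mul]
  exact (rank_sub_le _ _).trans (add_le_add (rank_mul_le_right _ _) (rank_mul_le_left _ _))

theorem rank_sub_smul_one_add_finrank_eigenspace [DecidableEq n] (P : Matrix n n K) (μ : K) :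
    (P - μ • 1).rank + Module.finrank K (Module.End.eigenspace (toLin' P) μ) =
      Fintype.card n := by
  rw [eigenspace_toLin'_eq_ker, rank, ← Module.finrank_fintype_fun_eq_card K]
  exact LinearMap.finrank_range_add_finrank_ker _

end Field

variable {𝕜 : Type*} [RCLike 𝕜]

open scoped ComplexOrder in
theorem mulVec_eq_zero_of_mulVec_mulVec_eq_zero_s1 {N : Matrix n n 𝕜} [hN : IsStarNormal N]
    {v : n → 𝕜} (hv : N *ᵥ N *ᵥ v = 0) : N *ᵥ v = 0 := by
  have hNN : (Nᴴ * N)ᴴ * (Nᴴ * N) = (N * N)ᴴ * (N * N) := by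
    have hnormal := hN.star_comm_self.eq
    rw [star_eq_conjTranspose] at hnormal
    simp only [conjTranspose_mul, conjTranspose_conjTranspose]
    calc Nᴴ * N * (Nᴴ * N) = Nᴴ * (N * Nᴴ) * N := by noncomm_ring
      _ = Nᴴ * Nᴴ * (N * N) := by rw [← hnormal]; noncomm_ring
  rw [← conjTranspose_mul_self_mulVec_eq_zero, ← conjTranspose_mul_self_mulVec_eq_zero, hNN,
    ← mulVec_mulVec, ← mulVec_mulVec, hv, mulVec_zero]

variable [DecidableEq n]

instance isStarNormal_sub_smul_one (P : Matrix n n 𝕜) [IsStarNormal P] (μ : 𝕜) :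
    IsStarNormal (P - μ • 1) :=
  Commute.isStarNormal_sub (by simp [Commute.smul_right])

theorem finrank_eigenspace_eq_rootMultiplicity (P : Matrix n n 𝕜) [IsStarNormal P] (μ : 𝕜) :
    Module.finrank 𝕜 (Module.End.eigenspace (toLin' P) μ) = P.charpoly.rootMultiplicity μ := by
  rw [← Module.End.maxGenEigenspace_eq_eigenspace_of_ker_sq, LinearMap.finrank_maxGenEigenspace_eq,
    charpoly_toLin']
  rw [← toLin'_sub_smul_one]
  exact fun _ ↦ mulVec_eq_zero_of_mulVec_mulVec_eq_zero_s1

end Matrix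

theorem rank_commutator_le_of_eigenvalue_multiplicity_general
    (M : ℕ) (P : Matrix (Fin M) (Fin M) ℂ) (hP : P * Pᴴ = 1)
    (lam : ℂ)
    (k : ℕ) (hk : (Matrix.charpoly P).rootMultiplicity lam = k) :
    ∀ A : Matrix (Fin M) (Fin M) ℂ, (A * P - P * A).rank ≤ 2 * (M - k) := by
  intro A
  have : IsStarNormal P := isStarNormal_of_mem_unitary (Matrix.mem_unitaryGroup_iff.mpr hP)
  have hrank := P.rank_sub_smul_one_add_finrank_eigenspace lam
  rw [P.finrank_eigenspace_eq_rootMultiplicity, hk, Fintype.card_fin] at hrank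
  have := A.rank_commutator_le P lam
  omega

/-- Let `M ≥ 1`, let `P` be an `M × M` unitary complex matrix, and let
`lam` be an eigenvalue of `P` whose algebraic multiplicity (as a root of the characteristic
polynomial) equals `k`. Then for every matrix `A`, the rank of `A*P - P*A` is at most
`2*(M - k)`. -/
theorem rank_commutator_le_of_eigenvalue_multiplicity
    (M : ℕ) (hM : 1 ≤ M) (P : Matrix (Fin M) (Fin M) ℂ) (hP : P * Pᴴ = 1)
    (lam : ℂ) (hroot : (Matrix.charpoly P).IsRoot lam)
    (k : ℕ) (hk : (Matrix.charpoly P).rootMultiplicity lam = k) :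
    ∀ A : Matrix (Fin M) (Fin M) ℂ, (A * P - P * A).rank ≤ 2 * (M - k) :=
  rank_commutator_le_of_eigenvalue_multiplicity_general M P hP lam k hk
end

section
/- Let M ≥ 1 and let P = diag(λ_1, …, λ_M) ∈ ℂ^{M×M} be a diagonal matrix with |λ_i| = 1 for all i. If no value occurs among λ_1, …, λ_M more than ⌊M/2⌋ times, then there exists a matrix A ∈ ℂ^{M×M} such that AP − PA is invertible. -/
/-!
The commutator `A * diagonal d - diagonal d * A` multiplies the entry `A i j` by `d j - d i`.
Hence if some permutation `σ` sends every index to one carrying a different diagonal value,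
rescaling the permutation matrix of `σ` entrywise by `(d (σ i) - d i)⁻¹` gives a matrix whose
commutator with `diagonal d` is that (invertible) permutation matrix. Such a `σ` exists by Hall's
marriage theorem as soon as no value occupies more than half of the diagonal.
-/

open Finset Equiv

section Derangement

variable {ι α : Type*} [Fintype ι] [DecidableEq α]

/-- If `A` lies in one fibre of `l`, it has at most `card ι / 2` elements while the complement of
that fibre has at least `card ι / 2`; otherwise the values of `l` on `A` already differ from every
value of `l`. -/
lemma card_le_card_filter_exists_apply_ne_of_card_fiber_le {l : ι → α}
    (hmult : ∀ c, #{i | l i = c} ≤ Fintype.card ι / 2) (A : Finset ι) :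
    #A ≤ #{j | ∃ i ∈ A, l i ≠ l j} := by
  rcases A.eq_empty_or_nonempty with rfl | ⟨i₀, hi₀⟩
  · simp
  by_cases hfiber : A ⊆ ({i | l i = l i₀} : Finset ι)
  · have hcompl : #{i | l i = l i₀} + #{j | ¬l j = l i₀} = Fintype.card ι :=
      card_filter_add_card_filter_not _
    have htarget : ({j | ¬l j = l i₀} : Finset ι) ⊆ ({j | ∃ i ∈ A, l i ≠ l j} : Finset ι) :=
      fun j hj => by
        simp only [mem_filter, mem_univ, true_and] at hj ⊢
        exact ⟨i₀, hi₀, Ne.symm hj⟩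
    have := card_le_card hfiber
    have := card_le_card htarget
    have := hmult (l i₀)
    omega
  · obtain ⟨i₁, hi₁, hi₁_fiber⟩ := not_subset.1 hfiber
    have hne : l i₁ ≠ l i₀ := by simpa using hi₁_fiber
    have huniv : ({j | ∃ i ∈ A, l i ≠ l j} : Finset ι) = univ := by
      refine eq_univ_of_forall fun j => mem_filter.2 ⟨mem_univ j, ?_⟩
      by_cases hj : l j = l i₀
      · exact ⟨i₁, hi₁, hj ▸ hne⟩
      · exact ⟨i₀, hi₀, Ne.symm hj⟩
    rw [huniv]
    exact card_le_univ A

theorem exists_perm_apply_ne_of_card_fiber_le {l : ι → α}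
    (hmult : ∀ c, #{i | l i = c} ≤ Fintype.card ι / 2) :
    ∃ σ : Perm ι, ∀ i, l (σ i) ≠ l i := by
  classical
  obtain ⟨f, hf, hne⟩ := (Fintype.all_card_le_filter_rel_iff_exists_injective
    fun i j => l i ≠ l j).1 (card_le_card_filter_exists_apply_ne_of_card_fiber_le hmult)
  exact ⟨Equiv.ofBijective f (Finite.injective_iff_bijective.1 hf), fun i => (hne i).symm⟩

end Derangement

namespace Matrix

variable {n K : Type*} [Fintype n] [DecidableEq n]

lemma mul_diagonal_sub_diagonal_mul_apply_s2 [CommRing K] (A : Matrix n n K) (d : n → K) (i j : n) :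
    (A * diagonal d - diagonal d * A) i j = (d j - d i) * A i j := by
  simp only [sub_apply, mul_diagonal, diagonal_mul]
  ring

theorem exists_mul_diagonal_sub_diagonal_mul_eq_permMatrix [Field K] (d : n → K) (σ : Perm n)
    (hσ : ∀ i, d (σ i) ≠ d i) :
    ∃ A : Matrix n n K, A * diagonal d - diagonal d * A = σ.permMatrix K := by
  refine ⟨of fun i j => if σ i = j then (d j - d i)⁻¹ else 0, ?_⟩
  ext i j
  rw [mul_diagonal_sub_diagonal_mul_apply_s2, of_apply]
  by_cases h : σ i = j
  · subst h
    simp [mul_inv_cancel₀ (sub_ne_zero.2 (hσ i))]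
  · simp [h]

lemma isUnit_permMatrix_s2 [Semiring K] (σ : Perm n) : IsUnit (σ.permMatrix K) := by
  simpa using (Group.isUnit σ⁻¹).map (permMatrixHom (n := n) (R := K))

end Matrix

theorem exists_commutator_invertible_of_diagonal_multiplicity_le_general
    (M : ℕ) (l : Fin M → ℂ)
    (hmult : ∀ c : ℂ, (Finset.univ.filter fun i => l i = c).card ≤ M / 2) :
    ∃ A : Matrix (Fin M) (Fin M) ℂ,
      IsUnit (A * Matrix.diagonal l - Matrix.diagonal l * A) := by
  obtain ⟨σ, hσ⟩ := exists_perm_apply_ne_of_card_fiber_le (l := l) (by simpa using hmult)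
  obtain ⟨A, hA⟩ := Matrix.exists_mul_diagonal_sub_diagonal_mul_eq_permMatrix l σ hσ
  exact ⟨A, hA ▸ Matrix.isUnit_permMatrix_s2 σ⟩

/-- Let `M ≥ 1` and let `P = diag(l 1, …, l M)` be a diagonal complex
matrix with `|l i| = 1` for all `i`. If no value occurs among the diagonal entries more
than `⌊M/2⌋` times, then there exists a matrix `A` with `A*P - P*A` invertible. -/
theorem exists_commutator_invertible_of_diagonal_multiplicity_le
    (M : ℕ) (hM : 1 ≤ M) (l : Fin M → ℂ)
    (hl : ∀ i, ‖l i‖ = 1)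
    (hmult : ∀ c : ℂ, (Finset.univ.filter fun i => l i = c).card ≤ M / 2) :
    ∃ A : Matrix (Fin M) (Fin M) ℂ,
      IsUnit (A * Matrix.diagonal l - Matrix.diagonal l * A) :=
  exists_commutator_invertible_of_diagonal_multiplicity_le_general M l hmult
end

section
/- Let Q ⊂ ℂ be a finite constellation with nonzero coordinate product distance. Then there exists θ ∈ [0, 2π) such that for all x, x′ ∈ Q^6 with x ≠ x′, the 3×4 difference matrix D(θ, x) − D(θ, x′) has rank 3. -/
/-- The `3 × 4` codeword-difference matrix `D(θ, x)` of the proposed rate-`3/2` STBC for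
three transmit antennas, built from `x = (x₁, …, x₆) ∈ ℂ⁶` via
`s₁ = Re x₁ + i·Im x₃`, `s₂ = Re x₂ + i·Im x₄`, `s₃ = Re x₆ + i·Im x₅`,
`s₄ = Re x₅ + i·Im x₆`, `s₅ = Re x₄ + i·Im x₂`, `s₆ = Re x₃ + i·Im x₁`. -/
noncomputable def Dmat (θ : ℝ) (x : Fin 6 → ℂ) : Matrix (Fin 3) (Fin 4) ℂ :=
  let e : ℂ := Complex.exp (θ * Complex.I)
  let s1 : ℂ := ((x 0).re : ℂ) + ((x 2).im : ℂ) * Complex.I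
  let s2 : ℂ := ((x 1).re : ℂ) + ((x 3).im : ℂ) * Complex.I
  let s3 : ℂ := ((x 5).re : ℂ) + ((x 4).im : ℂ) * Complex.I
  let s4 : ℂ := ((x 4).re : ℂ) + ((x 5).im : ℂ) * Complex.I
  let s5 : ℂ := ((x 3).re : ℂ) + ((x 1).im : ℂ) * Complex.I
  let s6 : ℂ := ((x 2).re : ℂ) + ((x 0).im : ℂ) * Complex.I
  !![s1, e * s4, -(starRingEnd ℂ) s2, -(e * (starRingEnd ℂ) s6);
     s2, e * s5, (starRingEnd ℂ) s1, e * (starRingEnd ℂ) s4;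
     e * s3, s6, -(e * (starRingEnd ℂ) s3), -(starRingEnd ℂ) s5]

open Matrix Polynomial Complex

local notation "cj" => starRingEnd ℂ

namespace STBCaux

lemma rank_eq_three_of_det (M : Matrix (Fin 3) (Fin 4) ℂ) (g : Fin 3 → Fin 4)
    (h : (M.submatrix id g).det ≠ 0) : M.rank = 3 := by
  refine le_antisymm (M.rank_le_card_height.trans_eq (by simp)) ?_
  have h1 : (M.submatrix id g).rank = 3 := by
    rw [Matrix.rank_of_isUnit _ ((Matrix.isUnit_iff_isUnit_det _).2 h.isUnit)]
    simp
  have h2 : (M.submatrix id g).rank ≤ M.rank := by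
    have e : M.submatrix id g
        = M * (1 : Matrix (Fin 4) (Fin 4) ℂ).submatrix (Equiv.refl (Fin 4)) g := by
      rw [Matrix.mul_submatrix_one]; rfl
    rw [e]; exact Matrix.rank_mul_le_left _ _
  omega

lemma exp_injOn :
    Set.InjOn (fun θ : ℝ => Complex.exp (θ * Complex.I)) (Set.Ico 0 (2 * Real.pi)) := by
  intro a ha b hb hab
  simp only [Complex.exp_eq_exp_iff_exists_int] at hab
  obtain ⟨n, hn⟩ := hab
  have hre : a = b + n * (2 * Real.pi) := by
    have := congrArg Complex.im hn
    simpa using this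
  obtain ⟨ha0, ha1⟩ := ha; obtain ⟨hb0, hb1⟩ := hb
  have hpi := Real.pi_pos
  have : (n : ℝ) = 0 := by
    rcases lt_trichotomy (n : ℤ) 0 with h | h | h
    · exfalso
      have : (n : ℝ) ≤ -1 := by exact_mod_cast (by omega : n ≤ -1)
      nlinarith
    · exact_mod_cast h
    · exfalso
      have : (1:ℝ) ≤ (n : ℝ) := by exact_mod_cast h
      nlinarith
  rw [hre, this]; ring

lemma det012 (e s1 s2 s3 s4 s5 s6 : ℂ) :
    (!![s1, e*s4, -(cj s2); s2, e*s5, cj s1; e*s3, s6, -(e*(cj s3))]).det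
      = e^2 * (-(cj s3 * s1 * s5) + cj s3 * s2 * s4 + cj s1 * s3 * s4 + cj s2 * s3 * s5)
        + (-(cj s1 * s1 * s6 + cj s2 * s2 * s6)) := by
  simp [Matrix.det_fin_three]; ring

lemma det023 (e s1 s2 s3 s4 s5 s6 : ℂ) :
    (!![s1, -(cj s2), -(e*(cj s6)); s2, cj s1, e*(cj s4); e*s3, -(e*(cj s3)), -(cj s5)]).det
      = e^2 * (cj s3 * cj s4 * s1 - cj s2 * cj s4 * s3 + cj s3 * cj s6 * s2 + cj s1 * cj s6 * s3)
        + (-(cj s1 * cj s5 * s1 + cj s2 * cj s5 * s2)) := by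
  simp [Matrix.det_fin_three]; ring

lemma det013 (e s1 s2 s3 s4 s5 s6 : ℂ) :
    (!![s1, e*s4, -(e*(cj s6)); s2, e*s5, e*(cj s4); e*s3, s6, -(cj s5)]).det
      = e * (-(cj s5 * s1 * s5) - cj s4 * s1 * s6 + cj s5 * s2 * s4 - cj s6 * s2 * s6)
        + e^3 * (cj s4 * s3 * s4 + cj s6 * s3 * s5) := by
  simp [Matrix.det_fin_three]; ring

noncomputable def S1 (y : Fin 6 → ℂ) : ℂ := ((y 0).re : ℂ) + ((y 2).im : ℂ) * Complex.I
noncomputable def S2 (y : Fin 6 → ℂ) : ℂ := ((y 1).re : ℂ) + ((y 3).im : ℂ) * Complex.I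
noncomputable def S3 (y : Fin 6 → ℂ) : ℂ := ((y 5).re : ℂ) + ((y 4).im : ℂ) * Complex.I
noncomputable def S4 (y : Fin 6 → ℂ) : ℂ := ((y 4).re : ℂ) + ((y 5).im : ℂ) * Complex.I
noncomputable def S5 (y : Fin 6 → ℂ) : ℂ := ((y 3).re : ℂ) + ((y 1).im : ℂ) * Complex.I
noncomputable def S6 (y : Fin 6 → ℂ) : ℂ := ((y 2).re : ℂ) + ((y 0).im : ℂ) * Complex.I

lemma sub012 (θ : ℝ) (y : Fin 6 → ℂ) :
    (Dmat θ y).submatrix id ![0,1,2]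
      = !![S1 y, Complex.exp (θ * Complex.I) * S4 y, -(cj (S2 y));
           S2 y, Complex.exp (θ * Complex.I) * S5 y, cj (S1 y);
           Complex.exp (θ * Complex.I) * S3 y, S6 y,
             -(Complex.exp (θ * Complex.I) * cj (S3 y))] := by
  ext i j
  fin_cases i <;> fin_cases j <;>
    simp [Dmat, Matrix.submatrix_apply, S1, S2, S3, S4, S5, S6]

lemma sub023 (θ : ℝ) (y : Fin 6 → ℂ) :
    (Dmat θ y).submatrix id ![0,2,3]
      = !![S1 y, -(cj (S2 y)), -(Complex.exp (θ * Complex.I) * cj (S6 y));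
           S2 y, cj (S1 y), Complex.exp (θ * Complex.I) * cj (S4 y);
           Complex.exp (θ * Complex.I) * S3 y, -(Complex.exp (θ * Complex.I) * cj (S3 y)),
             -(cj (S5 y))] := by
  ext i j
  fin_cases i <;> fin_cases j <;>
    simp [Dmat, Matrix.submatrix_apply, S1, S2, S3, S4, S5, S6]

lemma sub013 (θ : ℝ) (y : Fin 6 → ℂ) :
    (Dmat θ y).submatrix id ![0,1,3]
      = !![S1 y, Complex.exp (θ * Complex.I) * S4 y, -(Complex.exp (θ * Complex.I) * cj (S6 y));
           S2 y, Complex.exp (θ * Complex.I) * S5 y, Complex.exp (θ * Complex.I) * cj (S4 y);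
           Complex.exp (θ * Complex.I) * S3 y, S6 y, -(cj (S5 y))] := by
  ext i j
  fin_cases i <;> fin_cases j <;>
    simp [Dmat, Matrix.submatrix_apply, S1, S2, S3, S4, S5, S6]

lemma mk_ne_zero_of_re {r m : ℝ} (h : r ≠ 0) : (r:ℂ) + (m:ℂ) * Complex.I ≠ 0 := by
  intro h0
  have := congrArg Complex.re h0
  simp at this
  exact h this

lemma mk_ne_zero_of_im {r m : ℝ} (h : m ≠ 0) : (r:ℂ) + (m:ℂ) * Complex.I ≠ 0 := by
  intro h0
  have := congrArg Complex.im h0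
  simp at this
  exact h this

lemma normSq_sum_ne (a b : ℂ) (h : a ≠ 0 ∨ b ≠ 0) : cj a * a + cj b * b ≠ 0 := by
  rw [mul_comm (cj a), mul_comm (cj b), Complex.mul_conj, Complex.mul_conj]
  rw [← Complex.ofReal_add, Complex.ofReal_ne_zero]
  rcases h with h | h
  · exact ne_of_gt (add_pos_of_pos_of_nonneg (Complex.normSq_pos.2 h) (Complex.normSq_nonneg b))
  · exact ne_of_gt (add_pos_of_nonneg_of_pos (Complex.normSq_nonneg a) (Complex.normSq_pos.2 h))

/-- Key pointwise lemma: for each admissible nonzero difference `y`, there is a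
nonzero polynomial whose nonvanishing at `e^{iθ}` forces rank 3. -/
lemma key (y : Fin 6 → ℂ) (hy : y ≠ 0)
    (hco : ∀ i, y i ≠ 0 → (y i).re ≠ 0 ∧ (y i).im ≠ 0) :
    ∃ p : Polynomial ℂ, p ≠ 0 ∧
      ∀ θ : ℝ, p.eval (Complex.exp (θ * Complex.I)) ≠ 0 → (Dmat θ y).rank = 3 := by
  set s1 := S1 y with hs1d
  set s2 := S2 y with hs2d
  set s3 := S3 y with hs3d
  set s4 := S4 y with hs4d
  set s5 := S5 y with hs5d
  set s6 := S6 y with hs6d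
  by_cases hA : y 0 ≠ 0 ∨ y 2 ≠ 0
  · -- pair (s1, s6) both nonzero : use cols {0,1,2}
    have hs1 : s1 ≠ 0 := by
      rcases hA with h | h
      · exact mk_ne_zero_of_re (hco 0 h).1
      · exact mk_ne_zero_of_im (hco 2 h).2
    have hs6 : s6 ≠ 0 := by
      rcases hA with h | h
      · exact mk_ne_zero_of_im (hco 0 h).2
      · exact mk_ne_zero_of_re (hco 2 h).1
    refine ⟨Polynomial.C (-(cj s1 * s1 * s6 + cj s2 * s2 * s6))
        + Polynomial.C (-(cj s3 * s1 * s5) + cj s3 * s2 * s4 + cj s1 * s3 * s4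
            + cj s2 * s3 * s5) * Polynomial.X ^ 2, ?_, ?_⟩
    · intro h
      have h0 := congrArg (fun q => Polynomial.coeff q 0) h
      simp [Polynomial.coeff_add, Polynomial.coeff_C_mul, Polynomial.coeff_X_pow] at h0
      exact (mul_ne_zero (normSq_sum_ne s1 s2 (Or.inl hs1)) hs6) (by linear_combination -h0)
    · intro θ hev
      apply rank_eq_three_of_det _ ![0,1,2]
      rw [sub012, ← hs1d, ← hs2d, ← hs3d, ← hs4d, ← hs5d, ← hs6d, det012]
      intro h0
      apply hev
      simp [Polynomial.eval_add, Polynomial.eval_mul, Polynomial.eval_pow]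
      linear_combination h0
  · push_neg at hA
    by_cases hB : y 1 ≠ 0 ∨ y 3 ≠ 0
    · -- pair (s2, s5) both nonzero : use cols {0,2,3}
      have hs2 : s2 ≠ 0 := by
        rcases hB with h | h
        · exact mk_ne_zero_of_re (hco 1 h).1
        · exact mk_ne_zero_of_im (hco 3 h).2
      have hs5 : s5 ≠ 0 := by
        rcases hB with h | h
        · exact mk_ne_zero_of_im (hco 1 h).2
        · exact mk_ne_zero_of_re (hco 3 h).1
      refine ⟨Polynomial.C (-(cj s1 * cj s5 * s1 + cj s2 * cj s5 * s2))
          + Polynomial.C (cj s3 * cj s4 * s1 - cj s2 * cj s4 * s3 + cj s3 * cj s6 * s2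
              + cj s1 * cj s6 * s3) * Polynomial.X ^ 2, ?_, ?_⟩
      · intro h
        have h0 := congrArg (fun q => Polynomial.coeff q 0) h
        simp [Polynomial.coeff_add, Polynomial.coeff_C_mul, Polynomial.coeff_X_pow] at h0
        exact (mul_ne_zero (normSq_sum_ne s1 s2 (Or.inr hs2))
          ((map_ne_zero (starRingEnd ℂ)).2 hs5)) (by linear_combination -h0)
      · intro θ hev
        apply rank_eq_three_of_det _ ![0,2,3]
        rw [sub023, ← hs1d, ← hs2d, ← hs3d, ← hs4d, ← hs5d, ← hs6d, det023]
        intro h0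
        apply hev
        simp [Polynomial.eval_add, Polynomial.eval_mul, Polynomial.eval_pow]
        linear_combination h0
    · -- pair (s3, s4) both nonzero : use cols {0,1,3}
      push_neg at hB
      have hC : y 4 ≠ 0 ∨ y 5 ≠ 0 := by
        by_contra hc
        push_neg at hc
        apply hy
        funext i
        fin_cases i <;> simp [hA.1, hA.2, hB.1, hB.2, hc.1, hc.2]
      have hs3 : s3 ≠ 0 := by
        rcases hC with h | h
        · exact mk_ne_zero_of_im (hco 4 h).2
        · exact mk_ne_zero_of_re (hco 5 h).1
      have hs4 : s4 ≠ 0 := by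
        rcases hC with h | h
        · exact mk_ne_zero_of_re (hco 4 h).1
        · exact mk_ne_zero_of_im (hco 5 h).2
      have hz6 : s6 = 0 := by
        simp [hs6d, S6, hA.1, hA.2]
      have hz5 : s5 = 0 := by
        simp [hs5d, S5, hB.1, hB.2]
      refine ⟨Polynomial.C (-(cj s5 * s1 * s5) - cj s4 * s1 * s6 + cj s5 * s2 * s4
            - cj s6 * s2 * s6) * Polynomial.X ^ 1
          + Polynomial.C (cj s4 * s3 * s4 + cj s6 * s3 * s5) * Polynomial.X ^ 3, ?_, ?_⟩
      · intro h
        have h0 := congrArg (fun q => Polynomial.coeff q 3) h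
        simp only [Polynomial.coeff_add, Polynomial.coeff_C_mul, Polynomial.coeff_X_pow,
          Polynomial.coeff_zero] at h0
        norm_num at h0
        rw [hz6] at h0
        simp only [map_zero, zero_mul, mul_zero, add_zero, zero_add] at h0
        exact (mul_ne_zero (mul_ne_zero ((map_ne_zero (starRingEnd ℂ)).2 hs4) hs3) hs4) h0
      · intro θ hev
        apply rank_eq_three_of_det _ ![0,1,3]
        rw [sub013, ← hs1d, ← hs2d, ← hs3d, ← hs4d, ← hs5d, ← hs6d, det013]
        intro h0
        apply hev
        simp [Polynomial.eval_add, Polynomial.eval_mul, Polynomial.eval_pow]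
        linear_combination h0

lemma Dmat_sub (θ : ℝ) (x x' : Fin 6 → ℂ) :
    Dmat θ x - Dmat θ x' = Dmat θ (x - x') := by
  ext i j
  fin_cases i <;> fin_cases j <;>
    simp [Dmat, Complex.sub_re, Complex.sub_im, map_sub] <;> ring

end STBCaux

/-- Let `Q ⊂ ℂ` be a finite constellation with nonzero coordinate product
distance. Then there exists `θ ∈ [0, 2π)` such that for all `x ≠ x'` in `Q⁶`, the `3 × 4`
difference matrix `D(θ, x) - D(θ, x')` has rank `3`. -/
theorem exists_theta_rank_diff_eq_three
    (Q : Finset ℂ)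
    (hCPD : ∀ u ∈ Q, ∀ v ∈ Q, u ≠ v → u.re ≠ v.re ∧ u.im ≠ v.im) :
    ∃ θ : ℝ, 0 ≤ θ ∧ θ < 2 * Real.pi ∧
      ∀ x x' : Fin 6 → ℂ, (∀ i, x i ∈ Q) → (∀ i, x' i ∈ Q) → x ≠ x' →
        (Dmat θ x - Dmat θ x').rank = 3 := by
  classical
  -- choose a polynomial for every y
  have hex : ∀ y : Fin 6 → ℂ, ∃ p : Polynomial ℂ,
      (y ≠ 0 ∧ ∀ i, y i ≠ 0 → (y i).re ≠ 0 ∧ (y i).im ≠ 0) →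
        p ≠ 0 ∧ ∀ θ : ℝ, p.eval (Complex.exp (θ * Complex.I)) ≠ 0 → (Dmat θ y).rank = 3 := by
    intro y
    by_cases h : y ≠ 0 ∧ ∀ i, y i ≠ 0 → (y i).re ≠ 0 ∧ (y i).im ≠ 0
    · obtain ⟨p, hp1, hp2⟩ := STBCaux.key y h.1 h.2
      exact ⟨p, fun _ => ⟨hp1, hp2⟩⟩
    · exact ⟨1, fun hc => absurd hc h⟩
  choose p hp using hex
  -- the set of admissible differences
  set S : Set (Fin 6 → ℂ) := {x | ∀ i, x i ∈ Q} with hS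
  have hSfin : S.Finite := by
    have : S = Set.pi Set.univ (fun _ : Fin 6 => (Q : Set ℂ)) := by
      ext x; simp [hS, Set.mem_pi]
    rw [this]
    exact Set.Finite.pi (fun _ => Q.finite_toSet)
  set D : Set (Fin 6 → ℂ) := (fun q : (Fin 6 → ℂ) × (Fin 6 → ℂ) => q.1 - q.2) '' (S ×ˢ S)
    with hD
  have hDfin : D.Finite := (hSfin.prod hSfin).image _
  -- every nonzero element of D satisfies the coordinate condition
  have hco : ∀ y ∈ D, ∀ i, y i ≠ 0 → (y i).re ≠ 0 ∧ (y i).im ≠ 0 := by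
    rintro y ⟨⟨x, x'⟩, ⟨hx, hx'⟩, rfl⟩ i hi
    have hne : x i ≠ x' i := fun h => hi (by simp [h])
    have := hCPD (x i) (hx i) (x' i) (hx' i) hne
    constructor
    · simpa [Complex.sub_re, sub_ne_zero] using this.1
    · simpa [Complex.sub_im, sub_ne_zero] using this.2
  -- bad angles
  set B : Set ℝ := ⋃ y ∈ D ∩ {y | y ≠ 0},
      {θ ∈ Set.Ico (0:ℝ) (2 * Real.pi) | (p y).eval (Complex.exp (θ * Complex.I)) = 0}
    with hB
  have hBfin : B.Finite := by
    refine Set.Finite.biUnion (hDfin.inter_of_left _) ?_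
    rintro y ⟨hyD, hy0⟩
    have hpy : p y ≠ 0 := (hp y ⟨hy0, hco y hyD⟩).1
    have hroots : {z : ℂ | (p y).IsRoot z}.Finite := Polynomial.finite_setOf_isRoot hpy
    apply Set.Finite.of_finite_image (f := fun θ : ℝ => Complex.exp (θ * Complex.I))
    · exact hroots.subset (by rintro z ⟨θ, ⟨hθ1, hθ2⟩, rfl⟩; exact hθ2)
    · exact STBCaux.exp_injOn.mono (fun θ hθ => hθ.1)
  have hIco : (Set.Ico (0:ℝ) (2 * Real.pi)).Infinite :=
    Set.Ico_infinite (by positivity)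
  obtain ⟨θ, hθ⟩ := (hIco.diff hBfin).nonempty
  obtain ⟨⟨hθ0, hθ1⟩, hθB⟩ := hθ
  refine ⟨θ, hθ0, hθ1, ?_⟩
  intro x x' hx hx' hne
  rw [STBCaux.Dmat_sub]
  set y := x - x' with hy
  have hyD : y ∈ D := ⟨(x, x'), ⟨hx, hx'⟩, rfl⟩
  have hy0 : y ≠ 0 := sub_ne_zero.2 hne
  have hev : (p y).eval (Complex.exp (θ * Complex.I)) ≠ 0 := by
    intro h0
    apply hθB
    rw [hB]
    exact Set.mem_biUnion ⟨hyD, hy0⟩ ⟨⟨hθ0, hθ1⟩, h0⟩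
  exact (hp y ⟨hy0, hco y hyD⟩).2 θ hev
end

section
/- Let Δx = (Δx_1, …, Δx_6) ∈ ℂ^6 be a nonzero vector such that for every index i, if Δx_i ≠ 0 then both Re Δx_i ≠ 0 and Im Δx_i ≠ 0. Then the set { θ ∈ [0, 2π) : the 3×4 matrix D(θ, Δx) has rank strictly less than 3 } is finite. -/
noncomputable def Sc (a b : ℂ) : ℂ := (a.re : ℂ) + (b.im : ℂ) * Complex.I

lemma Sc_eq_zero_iff {a b : ℂ} : Sc a b = 0 ↔ a.re = 0 ∧ b.im = 0 := by
  rw [Sc, Complex.ext_iff]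
  simp

lemma injOn_expI : Set.InjOn (fun θ : ℝ => Complex.exp (θ * Complex.I))
    (Set.Ico 0 (2 * Real.pi)) := by
  rintro x ⟨hx0, hx1⟩ y ⟨hy0, hy1⟩ hxy
  simp only [Complex.exp_eq_exp_iff_exists_int] at hxy
  obtain ⟨n, hn⟩ := hxy
  have him := congrArg Complex.im hn
  simp [Complex.add_im, Complex.mul_im] at him
  -- him : x = y + n * (2 * π)
  have hpi := Real.pi_pos
  have : (n : ℝ) * (2 * Real.pi) = x - y := by push_cast at him ⊢; linarith
  have hb : |(n : ℝ) * (2 * Real.pi)| < 2 * Real.pi := by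
    rw [this, abs_sub_lt_iff]; constructor <;> linarith
  have hn0 : n = 0 := by
    by_contra hn0
    have h1 : (1 : ℝ) ≤ |(n : ℝ)| := by
      rw [← Int.cast_abs]
      exact_mod_cast Int.one_le_abs (by omega)
    rw [abs_mul, abs_of_pos (show (0:ℝ) < 2 * Real.pi by linarith)] at hb
    nlinarith
  rw [hn0] at this
  simp at this
  linarith

lemma finite_key (p : Polynomial ℂ) (hp : p ≠ 0) (S : Set ℝ)
    (hS : ∀ θ ∈ S, θ ∈ Set.Ico 0 (2 * Real.pi) ∧
      Polynomial.eval (Complex.exp (θ * Complex.I)) p = 0) : S.Finite := by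
  set f : ℝ → ℂ := fun θ => Complex.exp (θ * Complex.I)
  have hsub : S ⊆ Set.Ico 0 (2 * Real.pi) := fun θ hθ => (hS θ hθ).1
  apply Set.Finite.of_finite_image (f := f)
  · apply (Polynomial.finite_setOf_isRoot hp).subset
    rintro z ⟨θ, hθ, rfl⟩
    exact (hS θ hθ).2
  · exact injOn_expI.mono hsub

lemma rank_ge_of_minor (A : Matrix (Fin 3) (Fin 4) ℂ) (g : Fin 3 → Fin 4)
    (hdet : (A.submatrix id g).det ≠ 0) : 3 ≤ A.rank := by
  have hu : IsUnit (A.submatrix id g) :=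
    (Matrix.isUnit_iff_isUnit_det _).2 hdet.isUnit
  have h3 : (A.submatrix id g).rank = 3 := by
    rw [Matrix.rank_of_isUnit _ hu]; simp
  have heq : A.submatrix id g = A * ((1 : Matrix (Fin 4) (Fin 4) ℂ).submatrix id g) := by
    ext i k
    simp [Matrix.mul_apply, Matrix.one_apply, Matrix.submatrix_apply]
  calc (3 : ℕ) = (A.submatrix id g).rank := h3.symm
    _ ≤ A.rank := by rw [heq]; exact Matrix.rank_mul_le_left _ _

lemma det012 (θ : ℝ) (x : Fin 6 → ℂ) :
    ((Dmat θ x).submatrix id ![0, 1, 2]).det =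
      (Complex.exp (θ * Complex.I))^2 *
        (-((starRingEnd ℂ) (Sc (x 5) (x 4)) * Sc (x 0) (x 2) * Sc (x 3) (x 1))
          + (starRingEnd ℂ) (Sc (x 5) (x 4)) * Sc (x 1) (x 3) * Sc (x 4) (x 5)
          + (starRingEnd ℂ) (Sc (x 0) (x 2)) * Sc (x 5) (x 4) * Sc (x 4) (x 5)
          + (starRingEnd ℂ) (Sc (x 1) (x 3)) * Sc (x 5) (x 4) * Sc (x 3) (x 1))
      - Sc (x 2) (x 0) *
        (Sc (x 0) (x 2) * (starRingEnd ℂ) (Sc (x 0) (x 2))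
          + Sc (x 1) (x 3) * (starRingEnd ℂ) (Sc (x 1) (x 3))) := by
  simp [Dmat, Sc, Matrix.det_fin_three, Matrix.submatrix_apply]
  ring

lemma det123 (θ : ℝ) (x : Fin 6 → ℂ) :
    ((Dmat θ x).submatrix id ![1, 2, 3]).det =
      Complex.exp (θ * Complex.I) *
        (-((starRingEnd ℂ) (Sc (x 0) (x 2)) * (starRingEnd ℂ) (Sc (x 3) (x 1)) * Sc (x 4) (x 5))
          - (starRingEnd ℂ) (Sc (x 1) (x 3)) * (starRingEnd ℂ) (Sc (x 3) (x 1)) * Sc (x 3) (x 1)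
          - (starRingEnd ℂ) (Sc (x 1) (x 3)) * (starRingEnd ℂ) (Sc (x 4) (x 5)) * Sc (x 2) (x 0)
          + (starRingEnd ℂ) (Sc (x 0) (x 2)) * (starRingEnd ℂ) (Sc (x 2) (x 0)) * Sc (x 2) (x 0))
      + (Complex.exp (θ * Complex.I))^3 *
        ((starRingEnd ℂ) (Sc (x 5) (x 4)) * (starRingEnd ℂ) (Sc (x 4) (x 5)) * Sc (x 4) (x 5)
          + (starRingEnd ℂ) (Sc (x 5) (x 4)) * (starRingEnd ℂ) (Sc (x 2) (x 0)) * Sc (x 3) (x 1)) := by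
  simp [Dmat, Sc, Matrix.det_fin_three, Matrix.submatrix_apply]
  ring

lemma pair_zero {a b : ℂ} (ha : a ≠ 0 → a.re ≠ 0 ∧ a.im ≠ 0)
    (hb : b ≠ 0 → b.re ≠ 0 ∧ b.im ≠ 0) (h0 : Sc a b = 0) : a = 0 ∧ b = 0 := by
  rw [Sc_eq_zero_iff] at h0
  constructor
  · by_contra ha0; exact (ha ha0).1 h0.1
  · by_contra hb0; exact (hb hb0).2 h0.2

lemma det_zero_of_rank_lt (θ : ℝ) (x : Fin 6 → ℂ) (g : Fin 3 → Fin 4)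
    (hr : (Dmat θ x).rank < 3) : ((Dmat θ x).submatrix id g).det = 0 := by
  by_contra hd
  exact absurd (rank_ge_of_minor _ _ hd) (not_le.mpr hr)

/-- Let `Δx ∈ ℂ⁶` be a nonzero vector such that every nonzero coordinate
has nonzero real part and nonzero imaginary part. Then the set of `θ ∈ [0, 2π)` for which
the `3 × 4` matrix `D(θ, Δx)` has rank strictly less than `3` is finite. -/
theorem finite_theta_rank_lt_three
    (dx : Fin 6 → ℂ) (hne : dx ≠ 0)
    (h : ∀ i, dx i ≠ 0 → (dx i).re ≠ 0 ∧ (dx i).im ≠ 0) :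
    {θ : ℝ | 0 ≤ θ ∧ θ < 2 * Real.pi ∧ (Dmat θ dx).rank < 3}.Finite := by
  set s1 := Sc (dx 0) (dx 2) with hs1def
  set s2 := Sc (dx 1) (dx 3) with hs2def
  set s3 := Sc (dx 5) (dx 4) with hs3def
  set s4 := Sc (dx 4) (dx 5) with hs4def
  set s5 := Sc (dx 3) (dx 1) with hs5def
  set s6 := Sc (dx 2) (dx 0) with hs6def
  by_cases h6 : s6 = 0
  · -- s6 = 0, hence dx 0 = dx 2 = 0
    obtain ⟨hx2, hx0⟩ := pair_zero (h 2) (h 0) h6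
    by_cases h2 : s2 = 0
    · -- also dx 1 = dx 3 = 0; hence dx 4 ≠ 0 or dx 5 ≠ 0
      obtain ⟨hx1, hx3⟩ := pair_zero (h 1) (h 3) h2
      have hx45 : dx 4 ≠ 0 ∨ dx 5 ≠ 0 := by
        by_contra hc
        push_neg at hc
        apply hne
        funext i
        fin_cases i <;> simp [hx0, hx1, hx2, hx3, hc.1, hc.2]
      have hs4 : s4 ≠ 0 := fun h0 => by
        obtain ⟨h4, h5⟩ := pair_zero (h 4) (h 5) h0
        rcases hx45 with h' | h' <;> exact h' (by assumption)
      have hs3 : s3 ≠ 0 := fun h0 => by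
        obtain ⟨h5, h4⟩ := pair_zero (h 5) (h 4) h0
        rcases hx45 with h' | h' <;> exact h' (by assumption)
      have ha3 : (starRingEnd ℂ) s3 * (starRingEnd ℂ) s4 * s4
          + (starRingEnd ℂ) s3 * (starRingEnd ℂ) s6 * s5 ≠ 0 := by
        rw [h6]
        simp only [map_zero, mul_zero, zero_mul, add_zero]
        exact mul_ne_zero (mul_ne_zero ((_root_.map_ne_zero (starRingEnd ℂ)).mpr hs3) ((_root_.map_ne_zero (starRingEnd ℂ)).mpr hs4)) hs4
      set a1 : ℂ := -((starRingEnd ℂ) s1 * (starRingEnd ℂ) s5 * s4)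
          - (starRingEnd ℂ) s2 * (starRingEnd ℂ) s5 * s5
          - (starRingEnd ℂ) s2 * (starRingEnd ℂ) s4 * s6
          + (starRingEnd ℂ) s1 * (starRingEnd ℂ) s6 * s6 with ha1def
      set a3 : ℂ := (starRingEnd ℂ) s3 * (starRingEnd ℂ) s4 * s4
          + (starRingEnd ℂ) s3 * (starRingEnd ℂ) s6 * s5 with ha3def
      apply finite_key (Polynomial.C a1 * Polynomial.X + Polynomial.C a3 * Polynomial.X ^ 3)
      · intro hp
        apply ha3
        have := congrArg (fun q => Polynomial.coeff q 3) hp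
        simpa using this
      · rintro θ ⟨hθ0, hθ1, hθr⟩
        refine ⟨⟨hθ0, hθ1⟩, ?_⟩
        have hd := det_zero_of_rank_lt θ dx ![1, 2, 3] hθr
        simp only [Polynomial.eval_add, Polynomial.eval_mul, Polynomial.eval_C,
          Polynomial.eval_pow, Polynomial.eval_X]
        rw [← hd, det123, ha1def, ha3def, hs1def, hs2def, hs3def, hs4def, hs5def, hs6def]
        ring
    · -- s2 ≠ 0, hence s5 ≠ 0
      have hs5 : s5 ≠ 0 := fun h0 => by
        obtain ⟨h3, h1⟩ := pair_zero (h 3) (h 1) h0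
        exact h2 (by rw [hs2def]; simp [Sc, h3, h1])
      have hs1 : s1 = 0 := by rw [hs1def]; simp [Sc, hx0, hx2]
      have ha1 : -((starRingEnd ℂ) s1 * (starRingEnd ℂ) s5 * s4)
          - (starRingEnd ℂ) s2 * (starRingEnd ℂ) s5 * s5
          - (starRingEnd ℂ) s2 * (starRingEnd ℂ) s4 * s6
          + (starRingEnd ℂ) s1 * (starRingEnd ℂ) s6 * s6 ≠ 0 := by
        rw [h6, hs1]
        simp only [map_zero, mul_zero, zero_mul, add_zero, neg_zero, zero_sub, sub_zero]
        exact neg_ne_zero.mpr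
          (mul_ne_zero (mul_ne_zero ((_root_.map_ne_zero (starRingEnd ℂ)).mpr h2) ((_root_.map_ne_zero (starRingEnd ℂ)).mpr hs5)) hs5)
      set a1 : ℂ := -((starRingEnd ℂ) s1 * (starRingEnd ℂ) s5 * s4)
          - (starRingEnd ℂ) s2 * (starRingEnd ℂ) s5 * s5
          - (starRingEnd ℂ) s2 * (starRingEnd ℂ) s4 * s6
          + (starRingEnd ℂ) s1 * (starRingEnd ℂ) s6 * s6 with ha1def
      set a3 : ℂ := (starRingEnd ℂ) s3 * (starRingEnd ℂ) s4 * s4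
          + (starRingEnd ℂ) s3 * (starRingEnd ℂ) s6 * s5 with ha3def
      apply finite_key (Polynomial.C a1 * Polynomial.X + Polynomial.C a3 * Polynomial.X ^ 3)
      · intro hp
        apply ha1
        have := congrArg (fun q => Polynomial.coeff q 1) hp
        simpa [ha1def] using this
      · rintro θ ⟨hθ0, hθ1, hθr⟩
        refine ⟨⟨hθ0, hθ1⟩, ?_⟩
        have hd := det_zero_of_rank_lt θ dx ![1, 2, 3] hθr
        simp only [Polynomial.eval_add, Polynomial.eval_mul, Polynomial.eval_C,
          Polynomial.eval_pow, Polynomial.eval_X]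
        rw [← hd, det123, ha1def, ha3def, hs1def, hs2def, hs3def, hs4def, hs5def, hs6def]
        ring
  · -- s6 ≠ 0, hence s1 ≠ 0
    have hs1 : s1 ≠ 0 := fun h0 => by
      obtain ⟨h0', h2'⟩ := pair_zero (h 0) (h 2) h0
      exact h6 (by rw [hs6def]; simp [Sc, h0', h2'])
    have hsum : s1 * (starRingEnd ℂ) s1 + s2 * (starRingEnd ℂ) s2 ≠ 0 := by
      rw [Complex.mul_conj, Complex.mul_conj]
      rw [show ((Complex.normSq s1 : ℂ) + (Complex.normSq s2 : ℂ))
          = ((Complex.normSq s1 + Complex.normSq s2 : ℝ) : ℂ) by push_cast; ring]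
      rw [Complex.ofReal_ne_zero]
      have h1 : 0 < Complex.normSq s1 := Complex.normSq_pos.mpr hs1
      have h2 : 0 ≤ Complex.normSq s2 := Complex.normSq_nonneg _
      linarith
    set a0 : ℂ := -(s6 * (s1 * (starRingEnd ℂ) s1 + s2 * (starRingEnd ℂ) s2)) with ha0def
    set a2 : ℂ := -((starRingEnd ℂ) s3 * s1 * s5) + (starRingEnd ℂ) s3 * s2 * s4
        + (starRingEnd ℂ) s1 * s3 * s4 + (starRingEnd ℂ) s2 * s3 * s5 with ha2def
    have ha0 : a0 ≠ 0 := neg_ne_zero.mpr (mul_ne_zero h6 hsum)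
    apply finite_key (Polynomial.C a0 + Polynomial.C a2 * Polynomial.X ^ 2)
    · intro hp
      apply ha0
      have := congrArg (fun q => Polynomial.coeff q 0) hp
      simpa using this
    · rintro θ ⟨hθ0, hθ1, hθr⟩
      refine ⟨⟨hθ0, hθ1⟩, ?_⟩
      have hd := det_zero_of_rank_lt θ dx ![0, 1, 2] hθr
      simp only [Polynomial.eval_add, Polynomial.eval_mul, Polynomial.eval_C,
        Polynomial.eval_pow, Polynomial.eval_X]
      rw [← hd, det012, ha0def, ha2def, hs1def, hs2def, hs3def, hs4def, hs5def, hs6def]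
      ring
end

section
/- Fix θ ∈ ℝ. For Lebesgue-almost every pair (H₁, H₂) ∈ ℂ^{3×3} × ℂ^{3×3}, the 6×6 block matrix [[H₁, H₂], [conj(H₁P₁′), conj(H₂P₂′)]] is invertible. -/
open MeasureTheory

/-- The matrix `P₁′` used in the column-cancellation structure of the rate-`3/2` STBC. -/
noncomputable def P1' (θ : ℝ) : Matrix (Fin 3) (Fin 3) ℂ :=
  !![0, -1, 0;
     1, 0, 0;
     0, 0, -Complex.exp (2 * θ * Complex.I)]

/-- The matrix `P₂′` used in the column-cancellation structure of the rate-`3/2` STBC. -/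
noncomputable def P2' (θ : ℝ) : Matrix (Fin 3) (Fin 3) ℂ :=
  !![0, 0, -Complex.exp (θ * Complex.I);
     Complex.exp (2 * θ * Complex.I), 0, 0;
     0, -Complex.exp (θ * Complex.I), 0]

/-!
In real coordinates, the determinant of the block matrix is a complex polynomial: its entries are
`ℝ`-linear in `(H₁, H₂)`, since complex conjugation is `ℝ`-linear. A polynomial that is not
identically zero vanishes only on a Lebesgue-null set, by induction on the number of variables
and Fubini: off the (null) zero set of the leading coefficient in one variable, every slice in
that variable is a nonzero one-variable polynomial with finitely many roots. Finally, the
determinant is not identically zero: at `H₁ = 1`, `H₂ = diag(0, 1, 1)` it equals `-conj(e^{2iθ})²`.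
-/

open MvPolynomial

variable {𝕜 : Type*} [RCLike 𝕜]

theorem MvPolynomial.ae_eval_ofReal_ne_zero {n : ℕ} {p : MvPolynomial (Fin n) 𝕜} (hp : p ≠ 0) :
    ∀ᵐ x : Fin n → ℝ, eval (fun i => (x i : 𝕜)) p ≠ 0 := by
  induction n with
  | zero =>
    obtain ⟨c, rfl⟩ := C_surjective (Fin 0) p
    exact ae_of_all _ fun x => by simpa using hp
  | succ n ih =>
    set q := finSuccEquiv 𝕜 n p
    have hq : q ≠ 0 := (map_ne_zero_iff _ (finSuccEquiv 𝕜 n).injective).2 hp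
    have hslice : ∀ᵐ x : Fin n → ℝ, ∀ᵐ t : ℝ,
        eval (fun i => ((Fin.cons t x : Fin (n + 1) → ℝ) i : 𝕜)) p ≠ 0 := by
      filter_upwards [ih (Polynomial.leadingCoeff_ne_zero.2 hq)] with x hx
      have hmap : q.map (eval fun i => (x i : 𝕜)) ≠ 0 := fun h => hx <| by
        simpa using congrArg (Polynomial.coeff · q.natDegree) h
      have hroots := (Polynomial.finite_setOfPred_isRoot hmap).preimage
        (RCLike.ofReal_injective (K := 𝕜)).injOn
      rw [ae_iff]
      convert hroots.measure_zero volume using 3 with t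
      simp [Fin.comp_cons, ← Function.comp_def, eval_eq_eval_mv_eval', q]
    have hmeas : MeasurableSet {z : (Fin n → ℝ) × ℝ |
        eval (fun i => ((Fin.cons z.2 z.1 : Fin (n + 1) → ℝ) i : 𝕜)) p ≠ 0} :=
      (isOpen_ne_fun ((continuous_eval p).comp (by fun_prop)) continuous_const).measurableSet
    have hmp : MeasurePreserving (fun y : Fin (n + 1) → ℝ => (Fin.tail y, y 0)) :=
      Measure.measurePreserving_swap.comp (volume_preserving_piFinSuccAbove _ 0)
    simpa [Fin.cons_self_tail] using
      hmp.quasiMeasurePreserving.ae ((Measure.ae_prod_iff_ae_ae hmeas).2 hslice)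

/-- On `E = ℂⁿ` these are the polynomials in the coordinates `zᵢ` and their conjugates. -/
def realPolynomialFunctions (𝕜 E : Type*) [RCLike 𝕜] [AddCommGroup E] [Module ℝ E] :
    Subalgebra 𝕜 (E → 𝕜) :=
  Algebra.adjoin 𝕜 (Set.range fun ℓ : E →ₗ[ℝ] 𝕜 => ⇑ℓ)

section
variable {E : Type*} [AddCommGroup E] [Module ℝ E]

theorem exists_eq_eval_repr_of_mem_realPolynomialFunctions {ι : Type*} [Fintype ι]
    (b : Module.Basis ι ℝ E) {f : E → 𝕜} (hf : f ∈ realPolynomialFunctions 𝕜 E) :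
    ∃ p : MvPolynomial ι 𝕜, ∀ x, f x = eval (fun i => (b.repr x i : 𝕜)) p := by
  induction hf using Algebra.adjoin_induction with
  | mem _ hℓ =>
    obtain ⟨ℓ, rfl⟩ := hℓ
    refine ⟨∑ i, X i * C (ℓ (b i)), fun x => ?_⟩
    conv_lhs => rw [← b.sum_repr x]
    simp only [map_sum, map_mul, map_smul, eval_X, eval_C, RCLike.real_smul_eq_coe_mul]
  | algebraMap c => exact ⟨C c, fun x => by simp⟩
  | add f g _ _ hf hg =>
    obtain ⟨p, hp⟩ := hf
    obtain ⟨q, hq⟩ := hg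
    exact ⟨p + q, fun x => by simp [hp, hq]⟩
  | mul f g _ _ hf hg =>
    obtain ⟨p, hp⟩ := hf
    obtain ⟨q, hq⟩ := hg
    exact ⟨p * q, fun x => by simp [hp, hq]⟩

theorem det_comp_mem_realPolynomialFunctions {m : Type*} [Fintype m] [DecidableEq m]
    (L : E →ₗ[ℝ] Matrix m m 𝕜) : (fun x => (L x).det) ∈ realPolynomialFunctions 𝕜 E := by
  set S := realPolynomialFunctions 𝕜 E
  let N : Matrix m m S := .of fun i j =>
    ⟨fun x => L x i j, Algebra.subset_adjoin ⟨Matrix.entryLinearMap ℝ 𝕜 i j ∘ₗ L, rfl⟩⟩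
  convert N.det.prop using 1
  funext x
  exact (((Pi.evalRingHom _ x).comp S.val.toRingHom).map_det N).symm
end

theorem ae_ne_zero_of_mem_realPolynomialFunctions {E : Type*} [NormedAddCommGroup E]
    [NormedSpace ℝ E] [FiniteDimensional ℝ E] [MeasurableSpace E] [BorelSpace E]
    (μ : Measure E) [μ.IsAddHaarMeasure] {f : E → 𝕜}
    (hf : f ∈ realPolynomialFunctions 𝕜 E) (hf0 : f ≠ 0) : ∀ᵐ x ∂μ, f x ≠ 0 := by
  let b := Module.finBasis ℝ E
  obtain ⟨p, hp⟩ := exists_eq_eval_repr_of_mem_realPolynomialFunctions b hf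
  have hp0 : p ≠ 0 := by
    rintro rfl
    exact hf0 (funext fun x => by simp [hp])
  have hac : μ.map b.equivFunL ≪ volume := Measure.absolutelyContinuous_isAddHaarMeasure _ _
  simpa [hp] using ae_of_ae_map b.equivFunL.continuous.aemeasurable
    (hac.ae_le (MvPolynomial.ae_eval_ofReal_ne_zero hp0))

def conjBlockMatrix {n : Type*} [Fintype n] (P Q : Matrix n n 𝕜) :
    (n → n → 𝕜) × (n → n → 𝕜) →ₗ[ℝ] Matrix (n ⊕ n) (n ⊕ n) 𝕜 where
  toFun q := Matrix.fromBlocks (Matrix.of q.1) (Matrix.of q.2)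
    ((Matrix.of q.1 * P).map (starRingEnd 𝕜)) ((Matrix.of q.2 * Q).map (starRingEnd 𝕜))
  map_add' q q' := by
    ext (i | i) (j | j) <;> simp [Matrix.mul_apply, add_mul, Finset.sum_add_distrib]
  map_smul' c q := by
    ext (i | i) (j | j) <;> simp [Matrix.mul_apply, Finset.smul_sum, RCLike.conj_smul]

theorem det_conjBlockMatrix_one_diagonal (θ : ℝ) :
    (conjBlockMatrix (P1' θ) (P2' θ)
      (Matrix.of.symm 1, Matrix.of.symm (Matrix.diagonal ![0, 1, 1]))).det
      = -starRingEnd ℂ (Complex.exp (2 * θ * Complex.I)) ^ 2 := by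
  simp only [conjBlockMatrix, LinearMap.coe_mk, AddHom.coe_mk, Equiv.apply_symm_apply,
    Matrix.one_mul, Matrix.det_fromBlocks_one₁₁]
  simp [Matrix.det_fin_three, P1', P2', Matrix.mul_apply, Fin.sum_univ_three]
  ring

/-- Fix `θ ∈ ℝ`. For Lebesgue-almost every pair `(H₁, H₂)` of `3 × 3`
complex matrices, the `6 × 6` block matrix `[[H₁, H₂], [conj(H₁P₁′), conj(H₂P₂′)]]`
is invertible. -/
theorem ae_isUnit_fromBlocks_conj (θ : ℝ) :
    ∀ᵐ q : (Fin 3 → Fin 3 → ℂ) × (Fin 3 → Fin 3 → ℂ) ∂volume,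
      IsUnit (Matrix.fromBlocks (Matrix.of q.1) (Matrix.of q.2)
        ((Matrix.of q.1 * P1' θ).map (starRingEnd ℂ))
        ((Matrix.of q.2 * P2' θ).map (starRingEnd ℂ))) := by
  -- instance search does not find these through the nested `pi` and `prod` measure spaces
  have : (volume : Measure (Fin 3 → Fin 3 → ℂ)).IsAddHaarMeasure := Measure.pi.isAddHaarMeasure _
  have : (volume : Measure ((Fin 3 → Fin 3 → ℂ) × (Fin 3 → Fin 3 → ℂ))).IsAddHaarMeasure :=
    Measure.prod.instIsAddHaarMeasure _ _
  have hne : (fun q => (conjBlockMatrix (P1' θ) (P2' θ) q).det) ≠ 0 :=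
    fun h => by simpa [Complex.exp_ne_zero] using
      (det_conjBlockMatrix_one_diagonal θ).symm.trans (congrFun h _)
  filter_upwards [ae_ne_zero_of_mem_realPolynomialFunctions volume
    (det_comp_mem_realPolynomialFunctions _) hne] with q hq
  exact (Matrix.isUnit_iff_isUnit_det _).2 hq.isUnit
end

section
/- Fix θ ∈ ℝ and let H₂ = [[0, 0, −e^{−2iθ}], [0, 2, 0], [1, 0, 0]] ∈ ℂ^{3×3}. Then det( conj(H₂P₂′) − conj(P₁′)·H₂ ) = e^{−3iθ}(2 + e^{−iθ})(2 + e^{iθ}), which is nonzero; in particular, for every θ there exists H₂ ∈ ℂ^{3×3} such that conj(H₂P₂′) − conj(P₁′)·H₂ is invertible. -/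
/-- The particular matrix `H₂` exhibited in the proof of Theorem 3 of the paper. -/
noncomputable def H2mat (θ : ℝ) : Matrix (Fin 3) (Fin 3) ℂ :=
  !![0, 0, -Complex.exp (-(2 * θ) * Complex.I);
     0, 2, 0;
     1, 0, 0]

/-! With `u = e^{iθ}` every entry is a polynomial in `u` and `conj u`, and the only relation
needed is `conj u * u = 1`. The matrix then has just five nonzero entries, its determinant is
`conj u ^ 3 (2 + conj u)(2 + u)`, and `2 + z ≠ 0` whenever `‖z‖ = 1`. -/

open Complex ComplexConjugate Matrix

theorem map_conj_mul_sub_map_conj_mul_eq {R : Type*} [CommRing R] [StarRing R] {u : R}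
    (hu : conj u * u = 1) :
    (!![0, 0, -conj u ^ 2; 0, 2, 0; 1, 0, 0] * !![0, 0, -u; u ^ 2, 0, 0; 0, -u, 0]).map conj
        - (!![0, -1, 0; 1, 0, 0; 0, 0, -u ^ 2] : Matrix (Fin 3) (Fin 3) R).map conj
          * !![0, 0, -conj u ^ 2; 0, 2, 0; 1, 0, 0]
      = !![0, 2 + u, 0; 2 * conj u ^ 2, 0, conj u ^ 2; conj u ^ 2, 0, -conj u] := by
  have hu' : u ^ 2 * conj u = u := by linear_combination u * hu
  ext i j
  fin_cases i <;> fin_cases j <;> simp [mul_apply, Fin.sum_univ_three, hu', add_comm, map_ofNat]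

theorem det_eq_pow_mul_two_add_mul_two_add {R : Type*} [CommRing R] (u v : R) :
    !![0, 2 + u, 0; 2 * v ^ 2, 0, v ^ 2; v ^ 2, 0, -v].det = v ^ 3 * (2 + v) * (2 + u) := by
  simp [det_fin_three]
  ring

theorem exp_ofReal_mul_I_pow (θ : ℝ) (n : ℕ) : exp (θ * I) ^ n = exp (n * θ * I) := by
  rw [← exp_nat_mul, mul_assoc]

theorem conj_exp_ofReal_mul_I_pow (θ : ℝ) (n : ℕ) :
    conj (exp (θ * I)) ^ n = exp (-(n * θ) * I) := by
  rw [← exp_conj, ← exp_nat_mul, map_mul, conj_ofReal, conj_I]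
  ring_nf

theorem P1'_eq (θ : ℝ) : P1' θ = !![0, -1, 0; 1, 0, 0; 0, 0, -exp (θ * I) ^ 2] := by
  rw [P1', exp_ofReal_mul_I_pow]
  norm_num

theorem P2'_eq (θ : ℝ) :
    P2' θ = !![0, 0, -exp (θ * I); exp (θ * I) ^ 2, 0, 0; 0, -exp (θ * I), 0] := by
  rw [P2', exp_ofReal_mul_I_pow]
  norm_num

theorem H2mat_eq (θ : ℝ) : H2mat θ = !![0, 0, -conj (exp (θ * I)) ^ 2; 0, 2, 0; 1, 0, 0] := by
  rw [H2mat, conj_exp_ofReal_mul_I_pow]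
  norm_num

theorem two_add_ne_zero_of_norm_eq_one {z : ℂ} (hz : ‖z‖ = 1) : 2 + z ≠ 0 := by
  intro h
  rw [show z = -2 by linear_combination h] at hz
  norm_num at hz

/-- Fix `θ ∈ ℝ` and let `H₂` be as above. Then
`det(conj(H₂ P₂′) - conj(P₁′) · H₂) = e^{-3iθ}(2 + e^{-iθ})(2 + e^{iθ}) ≠ 0`; in
particular, for every `θ` there exists `H₂` such that `conj(H₂P₂′) - conj(P₁′)·H₂`
is invertible. -/
theorem det_conj_H2P2_sub_conjP1_H2 (θ : ℝ) :
    ((H2mat θ * P2' θ).map (starRingEnd ℂ) - (P1' θ).map (starRingEnd ℂ) * H2mat θ).det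
        = Complex.exp (-(3 * θ) * Complex.I) * (2 + Complex.exp (-θ * Complex.I))
          * (2 + Complex.exp (θ * Complex.I)) ∧
      ((H2mat θ * P2' θ).map (starRingEnd ℂ) - (P1' θ).map (starRingEnd ℂ) * H2mat θ).det
        ≠ 0 ∧
      ∃ H : Matrix (Fin 3) (Fin 3) ℂ,
        IsUnit ((H * P2' θ).map (starRingEnd ℂ) - (P1' θ).map (starRingEnd ℂ) * H) := by
  have hu : conj (exp (θ * I)) * exp (θ * I) = 1 := by
    rw [conj_mul', norm_exp_ofReal_mul_I, ofReal_one, one_pow]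
  have hdet : ((H2mat θ * P2' θ).map conj - (P1' θ).map conj * H2mat θ).det
      = conj (exp (θ * I)) ^ 3 * (2 + conj (exp (θ * I))) * (2 + exp (θ * I)) := by
    rw [P1'_eq, P2'_eq, H2mat_eq, map_conj_mul_sub_map_conj_mul_eq hu, det_eq_pow_mul_two_add_mul_two_add]
  have hne : ((H2mat θ * P2' θ).map conj - (P1' θ).map conj * H2mat θ).det ≠ 0 := by
    have hnorm : ‖conj (exp (θ * I))‖ = 1 := by rw [RCLike.norm_conj, norm_exp_ofReal_mul_I]
    rw [hdet]
    refine mul_ne_zero (mul_ne_zero ?_ (two_add_ne_zero_of_norm_eq_one hnorm))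
      (two_add_ne_zero_of_norm_eq_one (norm_exp_ofReal_mul_I θ))
    exact pow_ne_zero _ ((map_ne_zero _).mpr (exp_ne_zero _))
  refine ⟨?_, hne, H2mat θ, (isUnit_iff_isUnit_det _).mpr hne.isUnit⟩
  rw [hdet, conj_exp_ofReal_mul_I_pow θ 3, ← pow_one (conj _), conj_exp_ofReal_mul_I_pow θ 1]
  norm_num
end

section
/- For every integer M ≥ 2, the infimum of the function f(α) = Σ_{i=1}^{M} [ (2(M−i)+1)·α_i + M·max(0, 1 + α_i − α_M) ] over all α ∈ ℝ^M satisfying 0 ≤ α_1 ≤ α_2 ≤ ⋯ ≤ α_M equals M + 1, and it is attained at α_1 = ⋯ = α_{M−1} = 0, α_M = 1. -/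
/-- For every integer `M ≥ 2`, the infimum of
`f(α) = Σᵢ (2(M−i)+1)·αᵢ + M·max(0, 1 + αᵢ − α_M)` over all `α ∈ ℝ^M` with
`0 ≤ α₁ ≤ α₂ ≤ ⋯ ≤ α_M` equals `M + 1`, and it is attained at
`α₁ = ⋯ = α_{M−1} = 0`, `α_M = 1`. -/
theorem isLeast_diversity_exponent (M : ℕ) (hM : 2 ≤ M) :
    let f : (Fin M → ℝ) → ℝ := fun α =>
      ∑ i : Fin M, (((2 * (M - 1 - (i : ℕ)) + 1 : ℕ) : ℝ) * α i
        + (M : ℝ) * max 0 (1 + α i - α ⟨M - 1, by omega⟩))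
    let S : Set (Fin M → ℝ) := {α | 0 ≤ α ⟨0, by omega⟩ ∧ Monotone α}
    IsLeast (f '' S) ((M : ℝ) + 1) ∧
      (fun i : Fin M => if (i : ℕ) = M - 1 then (1 : ℝ) else 0) ∈ S ∧
      f (fun i : Fin M => if (i : ℕ) = M - 1 then (1 : ℝ) else 0) = (M : ℝ) + 1 := by
  intro f S
  have hM1 : M - 1 < M := by omega
  have h0M : (0 : ℕ) < M := by omega
  have hMR : (2 : ℝ) ≤ (M : ℝ) := by exact_mod_cast hM
  set jM : Fin M := ⟨M - 1, hM1⟩ with hjMdef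
  set j0 : Fin M := ⟨0, h0M⟩ with hj0def
  have hne : j0 ≠ jM := Fin.ne_of_val_ne (by show (0:ℕ) ≠ M - 1; omega)
  -- the candidate point
  have hβS : (fun i : Fin M => if (i : ℕ) = M - 1 then (1 : ℝ) else 0) ∈ S := by
    constructor
    · simp only [Set.mem_setOf_eq]
      have : (0 : ℕ) ≠ M - 1 := by omega
      simp [this]
    · intro i j hij
      by_cases hi : (i : ℕ) = M - 1
      · have hj : (j : ℕ) = M - 1 := by
          have h1 : (i : ℕ) ≤ (j : ℕ) := hij
          have := j.isLt
          omega
        simp [hi, hj]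
      · by_cases hj : (j : ℕ) = M - 1 <;> simp [hi, hj]
  have hβval : f (fun i : Fin M => if (i : ℕ) = M - 1 then (1 : ℝ) else 0) = (M : ℝ) + 1 := by
    show ∑ i : Fin M, _ = _
    rw [Finset.sum_eq_single jM]
    · have h1 : ((jM : Fin M) : ℕ) = M - 1 := rfl
      simp [h1, Nat.sub_self, add_comm]
    · intro i _ hi
      have hi' : (i : ℕ) ≠ M - 1 := by
        intro h; exact hi (Fin.ext h)
      have h1 : ((jM : Fin M) : ℕ) = M - 1 := rfl
      simp [hi', h1]
    · intro h; exact absurd (Finset.mem_univ jM) h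
  refine ⟨⟨⟨_, hβS, hβval⟩, ?_⟩, hβS, hβval⟩
  rintro y ⟨α, hαS, rfl⟩
  obtain ⟨hα0, hmono⟩ := hαS
  set g : Fin M → ℝ := fun i =>
    (((2 * (M - 1 - (i : ℕ)) + 1 : ℕ) : ℝ) * α i
      + (M : ℝ) * max 0 (1 + α i - α jM)) with hgdef
  have hαnn : ∀ i, 0 ≤ α i := fun i => le_trans hα0 (hmono (by simp [hj0def, Fin.le_def]))
  have hnn : ∀ i, 0 ≤ g i := by
    intro i
    apply add_nonneg
    · exact mul_nonneg (by positivity) (hαnn i)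
    · exact mul_nonneg (by positivity) (le_max_left _ _)
  have hfα : f α = ∑ i : Fin M, g i := rfl
  have key : g j0 + g jM ≤ ∑ i : Fin M, g i := by
    rw [← Finset.sum_pair hne]
    exact Finset.sum_le_sum_of_subset_of_nonneg (Finset.subset_univ _)
      (fun i _ _ => hnn i)
  have hgjM : g jM = α jM + (M : ℝ) := by
    have h1 : ((jM : Fin M) : ℕ) = M - 1 := rfl
    simp [hgdef, h1, Nat.sub_self]
  have ht : α j0 ≤ α jM := hmono (by simp [hj0def, hjMdef, Fin.le_def])
  rw [hfα]
  refine le_trans ?_ key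
  rw [hgjM]
  rcases le_or_gt 1 (α jM) with h1 | h1
  · have := hnn j0
    linarith
  · have hmax : 1 + α j0 - α jM ≤ max 0 (1 + α j0 - α jM) := le_max_right _ _
    have hc : 0 ≤ (((2 * (M - 1 - (j0 : ℕ)) + 1 : ℕ) : ℝ)) * α j0 :=
      mul_nonneg (by positivity) (hαnn j0)
    have hgj0 : (M : ℝ) * (1 + α j0 - α jM) ≤ g j0 := by
      have := mul_le_mul_of_nonneg_left hmax (by positivity : (0:ℝ) ≤ (M:ℝ))
      simp only [hgdef]
      linarith
    nlinarith [hαnn j0, hαnn jM]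
end
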